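/- arXiv:2112.07066 — 2 statements merged into one kernel-verified Lean document; each statement's English description precedes it below -/
import Mathlib

section
/- For an irreducible aperiodic finite Markov chain, any subset R of states, and any ε ∈ (0,1) with μ(R) < 1 − ε, the ε-mixing time satisfies t_mix(ε) ≥ (1 − ε − μ(R))/Φ(R), where Φ(R) is the bottleneck ratio of R. -/
open Finset

section MixingHelpers

set_option linter.unusedSectionVars false

variable {S : Type*} [Fintype S] [DecidableEq S] [Nonempty S]

lemma powNonneg_aux (P : Matrix S S ℝ) (hP0 : ∀ s s', 0 ≤ P s s') :
    ∀ t s s', 0 ≤ (P ^ t) s s' := by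
  intro t
  induction t with
  | zero =>
    intro s s'
    simp only [pow_zero, Matrix.one_apply]
    split <;> norm_num
  | succ t ih =>
    intro s s'
    rw [pow_succ, Matrix.mul_apply]
    exact Finset.sum_nonneg fun x _ => mul_nonneg (ih s x) (hP0 x s')

lemma powRowsum_aux (P : Matrix S S ℝ) (hP1 : ∀ s, ∑ s', P s s' = 1) :
    ∀ t s, ∑ s', (P ^ t) s s' = 1 := by
  intro t
  induction t with
  | zero => intro s; simp [Matrix.one_apply]
  | succ t ih =>
    intro s
    simp only [pow_succ, Matrix.mul_apply]
    rw [Finset.sum_comm]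
    simp_rw [← Finset.mul_sum, hP1, mul_one]
    exact ih s

lemma statPow_aux (P : Matrix S S ℝ) (μ : S → ℝ)
    (hstat : ∀ s', ∑ s, μ s * P s s' = μ s') :
    ∀ t s', ∑ s, μ s * (P ^ t) s s' = μ s' := by
  intro t
  induction t with
  | zero => intro s'; simp [Matrix.one_apply]
  | succ t ih =>
    intro s'
    simp only [pow_succ, Matrix.mul_apply]
    simp_rw [Finset.mul_sum]
    rw [Finset.sum_comm]
    simp_rw [← mul_assoc]
    calc ∑ x, ∑ s, μ s * (P ^ t) s x * P x s'
        = ∑ x, (∑ s, μ s * (P ^ t) s x) * P x s' := by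
          simp_rw [Finset.sum_mul]
      _ = ∑ x, μ x * P x s' := by simp_rw [ih]
      _ = μ s' := hstat s'

lemma contraction_aux (Q : Matrix S S ℝ) (δ : ℝ)
    (hQδ : ∀ s s', δ ≤ Q s s') (hQ1 : ∀ s, ∑ s', Q s s' = 1)
    (v : S → ℝ) (hv : ∑ s, v s = 0) :
    ∑ s', |∑ s, v s * Q s s'| ≤ (1 - (Fintype.card S : ℝ) * δ) * ∑ s, |v s| := by
  have key : ∀ s', |∑ s, v s * Q s s'| ≤ ∑ s, |v s| * (Q s s' - δ) := by
    intro s'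
    have h1 : ∑ s, v s * Q s s' = ∑ s, v s * (Q s s' - δ) := by
      simp only [mul_sub]
      rw [Finset.sum_sub_distrib]
      simp_rw [← Finset.sum_mul, hv, zero_mul, sub_zero]
    rw [h1]
    calc |∑ s, v s * (Q s s' - δ)| ≤ ∑ s, |v s * (Q s s' - δ)| :=
          Finset.abs_sum_le_sum_abs _ _
      _ = ∑ s, |v s| * (Q s s' - δ) := by
          refine Finset.sum_congr rfl fun s _ => ?_
          rw [abs_mul, abs_of_nonneg (show (0:ℝ) ≤ Q s s' - δ by linarith [hQδ s s'])]
  calc ∑ s', |∑ s, v s * Q s s'| ≤ ∑ s', ∑ s, |v s| * (Q s s' - δ) :=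
        Finset.sum_le_sum fun s' _ => key s'
    _ = ∑ s, |v s| * (1 - (Fintype.card S : ℝ) * δ) := by
        rw [Finset.sum_comm]
        refine Finset.sum_congr rfl fun s _ => ?_
        rw [← Finset.mul_sum]
        congr 1
        rw [Finset.sum_sub_distrib, hQ1]
        simp [Finset.card_univ]
    _ = (1 - (Fintype.card S : ℝ) * δ) * ∑ s, |v s| := by
        rw [← Finset.sum_mul]; ring

lemma halfBound_aux (v : S → ℝ) (hv : ∑ s, v s = 0) (A : Finset S) :
    ∑ s ∈ A, v s ≤ (∑ s, |v s|) / 2 := by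
  have h1 : ∑ s ∈ A, v s + ∑ s ∈ Aᶜ, v s = 0 := by
    rw [Finset.sum_add_sum_compl]; exact hv
  have h2 : ∑ s ∈ A, v s ≤ ∑ s ∈ A, |v s| :=
    Finset.sum_le_sum fun s _ => le_abs_self _
  have h3 : -∑ s ∈ Aᶜ, v s ≤ ∑ s ∈ Aᶜ, |v s| := by
    rw [← Finset.sum_neg_distrib]
    exact Finset.sum_le_sum fun s _ => neg_le_abs _
  have h4 : ∑ s ∈ A, |v s| + ∑ s ∈ Aᶜ, |v s| = ∑ s, |v s| :=
    Finset.sum_add_sum_compl _ _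
  linarith

lemma mixNonempty_aux (P : Matrix S S ℝ)
    (hP0 : ∀ s s', 0 ≤ P s s') (hP1 : ∀ s, ∑ s', P s s' = 1)
    (hprim : ∃ n, ∀ s s', 0 < (P ^ n) s s')
    (μ : S → ℝ) (hμ0 : ∀ s, 0 ≤ μ s) (hμ1 : ∑ s, μ s = 1)
    (hstat' : ∀ t s', ∑ s, μ s * (P ^ t) s s' = μ s')
    (ε : ℝ) (hε0 : 0 < ε) :
    {t : ℕ | ∀ s₀, (∑ s, |(P ^ t) s₀ s - μ s|) / 2 ≤ ε}.Nonempty := by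
  classical
  obtain ⟨n, hn⟩ := hprim
  set δ : ℝ := Finset.univ.inf' (by simp [Finset.univ_nonempty])
    (fun p : S × S => (P ^ n) p.1 p.2) with hδ
  have hδpos : 0 < δ := by
    rw [hδ, Finset.lt_inf'_iff]
    exact fun p _ => hn p.1 p.2
  have hδle : ∀ s s', δ ≤ (P ^ n) s s' := fun s s' =>
    Finset.inf'_le _ (Finset.mem_univ (s, s'))
  set α : ℝ := 1 - (Fintype.card S : ℝ) * δ with hα
  have hα1 : α < 1 := by
    have : (0:ℝ) < (Fintype.card S : ℝ) * δ :=
      mul_pos (by exact_mod_cast Fintype.card_pos) hδpos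
    simp [hα]; linarith
  have hα0 : 0 ≤ α := by
    obtain ⟨s⟩ := ‹Nonempty S›
    have h1 : (Fintype.card S : ℝ) * δ ≤ ∑ s', (P ^ n) s s' := by
      calc (Fintype.card S : ℝ) * δ = ∑ _s' : S, δ := by
            simp [Finset.card_univ, mul_comm]
        _ ≤ ∑ s', (P ^ n) s s' := Finset.sum_le_sum fun s' _ => hδle s s'
    rw [powRowsum_aux P hP1 n s] at h1
    simp [hα]; linarith
  have herr2 : ∀ t s₀, ∑ s, |(P ^ t) s₀ s - μ s| ≤ 2 := by
    intro t s₀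
    calc ∑ s, |(P ^ t) s₀ s - μ s| ≤ ∑ s, ((P ^ t) s₀ s + μ s) := by
          refine Finset.sum_le_sum fun s _ => ?_
          rw [abs_sub_le_iff]
          constructor <;> nlinarith [powNonneg_aux P hP0 t s₀ s, hμ0 s]
      _ = 2 := by rw [Finset.sum_add_distrib, powRowsum_aux P hP1 t s₀, hμ1]; norm_num
  have hstep : ∀ t s₀,
      ∑ s', |(P ^ (t + n)) s₀ s' - μ s'| ≤ α * ∑ s, |(P ^ t) s₀ s - μ s| := by
    intro t s₀
    have hv : ∑ s, ((P ^ t) s₀ s - μ s) = 0 := by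
      rw [Finset.sum_sub_distrib, powRowsum_aux P hP1 t s₀, hμ1]; ring
    have hkey := contraction_aux (P ^ n) δ hδle (powRowsum_aux P hP1 n)
      (fun s => (P ^ t) s₀ s - μ s) hv
    have hrw : ∀ s', ∑ s, ((P ^ t) s₀ s - μ s) * (P ^ n) s s'
        = (P ^ (t + n)) s₀ s' - μ s' := by
      intro s'
      simp_rw [sub_mul]
      rw [Finset.sum_sub_distrib, hstat' n s', pow_add, Matrix.mul_apply]
    simp_rw [hrw] at hkey
    exact hkey
  have hiter : ∀ k s₀, ∑ s, |(P ^ (k * n)) s₀ s - μ s| ≤ 2 * α ^ k := by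
    intro k
    induction k with
    | zero => intro s₀; simpa using herr2 0 s₀
    | succ k ih =>
      intro s₀
      have h1 : (k + 1) * n = k * n + n := by ring
      rw [h1]
      calc ∑ s, |(P ^ (k * n + n)) s₀ s - μ s|
          ≤ α * ∑ s, |(P ^ (k * n)) s₀ s - μ s| := hstep (k * n) s₀
        _ ≤ α * (2 * α ^ k) := mul_le_mul_of_nonneg_left (ih s₀) hα0
        _ = 2 * α ^ (k + 1) := by ring
  obtain ⟨k, hk⟩ := exists_pow_lt_of_lt_one hε0 hα1
  refine ⟨k * n, fun s₀ => ?_⟩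
  have h1 := hiter k s₀
  have hαk : α ^ k < ε := hk
  linarith

end MixingHelpers

/-- For an irreducible aperiodic finite Markov chain, any subset R of states,
and any ε ∈ (0,1) with μ(R) < 1 − ε, the ε-mixing time satisfies
t_mix(ε) ≥ (1 − ε − μ(R))/Φ(R). -/
theorem mixing_ge_bottleneck_general
    {S : Type*} [Fintype S] [DecidableEq S] [Nonempty S]
    (P : Matrix S S ℝ)
    (hP0 : ∀ s s', 0 ≤ P s s') (hP1 : ∀ s, ∑ s', P s s' = 1)
    (hprim : ∃ n, ∀ s s', 0 < (P ^ n) s s')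
    (μ : S → ℝ) (hμ0 : ∀ s, 0 ≤ μ s) (hμ1 : ∑ s, μ s = 1)
    (hstat : ∀ s', ∑ s, μ s * P s s' = μ s')
    (R : Finset S) (hne : R.Nonempty)
    (ε : ℝ) (hε0 : 0 < ε) (hε1 : ε < 1)
    (hmass : ∑ s ∈ R, μ s < 1 - ε)
    (tmix : ℕ)
    (htmix : tmix = sInf {t : ℕ | ∀ s₀, (∑ s, |(P ^ t) s₀ s - μ s|) / 2 ≤ ε}) :
    (tmix : ℝ) ≥
      (1 - ε - ∑ s ∈ R, μ s) /
        ((∑ s' ∈ Rᶜ, ∑ s ∈ R, μ s * P s s') / (∑ s ∈ R, μ s)) := by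
  classical
  have hstat' := statPow_aux P μ hstat
  set M : ℝ := ∑ s ∈ R, μ s with hMdef
  set L : ℝ := ∑ s' ∈ Rᶜ, ∑ s ∈ R, μ s * P s s' with hLdef
  obtain ⟨n, hn⟩ := hprim
  -- μ is everywhere positive
  have hμpos : ∀ s', 0 < μ s' := by
    intro s'
    obtain ⟨s, hs⟩ : ∃ s, 0 < μ s := by
      by_contra h
      push_neg at h
      have : ∑ s, μ s = 0 :=
        Finset.sum_eq_zero fun s _ => le_antisymm (h s) (hμ0 s)
      rw [hμ1] at this; norm_num at this
    have h1 : μ s * (P ^ n) s s' ≤ ∑ x, μ x * (P ^ n) x s' :=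
      Finset.single_le_sum
        (fun x _ => mul_nonneg (hμ0 x) (hn x s').le) (Finset.mem_univ s)
    rw [hstat' n s'] at h1
    exact lt_of_lt_of_le (mul_pos hs (hn s s')) h1
  have hMpos : 0 < M := Finset.sum_pos (fun s _ => hμpos s) hne
  -- Rᶜ is nonempty
  have hRc : Rᶜ.Nonempty := by
    by_contra h
    rw [Finset.not_nonempty_iff_eq_empty, Finset.compl_eq_empty_iff] at h
    rw [hMdef, h, hμ1] at hmass
    linarith
  -- L > 0
  have hL0 : 0 ≤ L :=
    Finset.sum_nonneg fun s' _ => Finset.sum_nonneg fun s _ =>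
      mul_nonneg (hμ0 s) (hP0 s s')
  have hLpos : 0 < L := by
    rcases hL0.lt_or_eq with h | h
    · exact h
    exfalso
    have hzero : ∀ s ∈ R, ∀ s' ∈ Rᶜ, P s s' = 0 := by
      intro s hs s' hs'
      have h1 := (Finset.sum_eq_zero_iff_of_nonneg fun s' _ =>
        Finset.sum_nonneg fun s _ => mul_nonneg (hμ0 s) (hP0 s s')).mp h.symm s' hs'
      have h2 := (Finset.sum_eq_zero_iff_of_nonneg fun s _ =>
        mul_nonneg (hμ0 s) (hP0 s s')).mp h1 s hs
      rcases mul_eq_zero.mp h2 with h3 | h3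
      · exact absurd h3 (hμpos s).ne'
      · exact h3
    have hpowzero : ∀ m, ∀ s ∈ R, ∀ s' ∈ Rᶜ, (P ^ m) s s' = 0 := by
      intro m
      induction m with
      | zero =>
        intro s hs s' hs'
        have hne' : s ≠ s' := fun e => (Finset.mem_compl.mp hs') (e ▸ hs)
        simp [Matrix.one_apply, hne']
      | succ m ih =>
        intro s hs s' hs'
        rw [pow_succ, Matrix.mul_apply]
        refine Finset.sum_eq_zero fun x _ => ?_
        by_cases hx : x ∈ R
        · rw [hzero x hx s' hs', mul_zero]
        · rw [ih s hs x (Finset.mem_compl.mpr hx), zero_mul]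
    obtain ⟨s, hs⟩ := hne
    obtain ⟨s', hs'⟩ := hRc
    exact absurd (hpowzero n s hs s' hs') (hn s s').ne'
  -- escape probability bound : g t ≤ t * L
  have hg : ∀ t : ℕ, ∑ s ∈ R, μ s * ∑ s' ∈ Rᶜ, (P ^ t) s s' ≤ (t : ℝ) * L := by
    intro t
    induction t with
    | zero =>
      have hz : ∀ s ∈ R, μ s * ∑ s' ∈ Rᶜ, (P ^ 0) s s' = 0 := by
        intro s hs
        have : ∑ s' ∈ Rᶜ, (P ^ 0) s s' = 0 := by
          refine Finset.sum_eq_zero fun s' hs' => ?_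
          have hne' : s ≠ s' := fun e => (Finset.mem_compl.mp hs') (e ▸ hs)
          simp [Matrix.one_apply, hne']
        rw [this, mul_zero]
      rw [Finset.sum_congr rfl hz]
      simp
    | succ t ih =>
      have key : ∑ s ∈ R, μ s * ∑ s' ∈ Rᶜ, (P ^ (t + 1)) s s'
          = ∑ x, (∑ s ∈ R, μ s * (P ^ t) s x) * (∑ s' ∈ Rᶜ, P x s') := by
        simp only [pow_succ, Matrix.mul_apply]
        calc ∑ s ∈ R, μ s * ∑ s' ∈ Rᶜ, ∑ x, (P ^ t) s x * P x s'
            = ∑ s ∈ R, μ s * ∑ x, (P ^ t) s x * ∑ s' ∈ Rᶜ, P x s' := by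
              refine Finset.sum_congr rfl fun s _ => ?_
              rw [Finset.sum_comm]
              simp_rw [← Finset.mul_sum]
          _ = ∑ s ∈ R, ∑ x, μ s * (P ^ t) s x * ∑ s' ∈ Rᶜ, P x s' := by
              refine Finset.sum_congr rfl fun s _ => ?_
              rw [Finset.mul_sum]
              simp_rw [mul_assoc]
          _ = ∑ x, ∑ s ∈ R, μ s * (P ^ t) s x * ∑ s' ∈ Rᶜ, P x s' := Finset.sum_comm
          _ = ∑ x, (∑ s ∈ R, μ s * (P ^ t) s x) * (∑ s' ∈ Rᶜ, P x s') := by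
              refine Finset.sum_congr rfl fun x _ => ?_
              rw [Finset.sum_mul]
      set a : S → ℝ := fun x => ∑ s ∈ R, μ s * (P ^ t) s x with ha
      set b : S → ℝ := fun x => ∑ s' ∈ Rᶜ, P x s' with hb
      have ha0 : ∀ x, 0 ≤ a x :=
        fun x => Finset.sum_nonneg fun s _ =>
          mul_nonneg (hμ0 s) (powNonneg_aux P hP0 t s x)
      have haμ : ∀ x, a x ≤ μ x := by
        intro x
        have h1 : ∑ s ∈ R, μ s * (P ^ t) s x ≤ ∑ s, μ s * (P ^ t) s x :=
          Finset.sum_le_sum_of_subset_of_nonneg (Finset.subset_univ R)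
            (fun s _ _ => mul_nonneg (hμ0 s) (powNonneg_aux P hP0 t s x))
        rw [hstat' t x] at h1
        exact h1
      have hb0 : ∀ x, 0 ≤ b x :=
        fun x => Finset.sum_nonneg fun s' _ => hP0 x s'
      have hb1 : ∀ x, b x ≤ 1 := by
        intro x
        have h1 : ∑ s' ∈ Rᶜ, P x s' ≤ ∑ s', P x s' :=
          Finset.sum_le_sum_of_subset_of_nonneg (Finset.subset_univ Rᶜ)
            (fun s' _ _ => hP0 x s')
        rw [hP1 x] at h1
        exact h1
      have hsplit : ∑ x, a x * b x = ∑ x ∈ R, a x * b x + ∑ x ∈ Rᶜ, a x * b x :=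
        (Finset.sum_add_sum_compl R _).symm
      have hpart1 : ∑ x ∈ R, a x * b x ≤ L := by
        calc ∑ x ∈ R, a x * b x ≤ ∑ x ∈ R, μ x * b x :=
              Finset.sum_le_sum fun x _ =>
                mul_le_mul_of_nonneg_right (haμ x) (hb0 x)
          _ = L := by
              rw [hLdef, Finset.sum_comm]
              refine Finset.sum_congr rfl fun x _ => ?_
              rw [hb, Finset.mul_sum]
      have hpart2 : ∑ x ∈ Rᶜ, a x * b x ≤ ∑ s ∈ R, μ s * ∑ s' ∈ Rᶜ, (P ^ t) s s' := by
        calc ∑ x ∈ Rᶜ, a x * b x ≤ ∑ x ∈ Rᶜ, a x := by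
              refine Finset.sum_le_sum fun x _ => ?_
              nlinarith [ha0 x, hb0 x, hb1 x]
          _ = ∑ s ∈ R, μ s * ∑ s' ∈ Rᶜ, (P ^ t) s s' := by
              rw [ha, Finset.sum_comm]
              refine Finset.sum_congr rfl fun s _ => ?_
              rw [Finset.mul_sum]
      rw [key, hsplit]
      push_cast
      linarith
  -- membership of tmix in the mixing set
  have hmem : ∀ s₀, (∑ s, |(P ^ tmix) s₀ s - μ s|) / 2 ≤ ε := by
    have h1 := Nat.sInf_mem (mixNonempty_aux P hP0 hP1 ⟨n, hn⟩ μ hμ0 hμ1 hstat' ε hε0)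
    rw [← htmix] at h1
    exact h1
  -- lower bound on exit mass for every start state
  have hlow : ∀ s₀ ∈ R, 1 - ε - M ≤ ∑ s' ∈ Rᶜ, (P ^ tmix) s₀ s' := by
    intro s₀ _
    have hv : ∑ s, (μ s - (P ^ tmix) s₀ s) = 0 := by
      rw [Finset.sum_sub_distrib, hμ1, powRowsum_aux P hP1 tmix s₀]; ring
    have h1 := halfBound_aux (fun s => μ s - (P ^ tmix) s₀ s) hv Rᶜ
    have h2 : (∑ s, |μ s - (P ^ tmix) s₀ s|) / 2 ≤ ε := by
      have habs : ∀ s, |μ s - (P ^ tmix) s₀ s| = |(P ^ tmix) s₀ s - μ s| :=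
        fun s => abs_sub_comm _ _
      simp_rw [habs]
      exact hmem s₀
    have h3 : ∑ s' ∈ Rᶜ, μ s' = 1 - M := by
      have h5 := Finset.sum_add_sum_compl R μ
      rw [hμ1] at h5
      linarith
    have h4 : ∑ s' ∈ Rᶜ, (μ s' - (P ^ tmix) s₀ s') ≤ ε := le_trans h1 h2
    rw [Finset.sum_sub_distrib, h3] at h4
    linarith
  -- combine
  have hcomb : M * (1 - ε - M) ≤ (tmix : ℝ) * L := by
    calc M * (1 - ε - M) = ∑ s ∈ R, μ s * (1 - ε - M) := by
          rw [← Finset.sum_mul]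
      _ ≤ ∑ s ∈ R, μ s * ∑ s' ∈ Rᶜ, (P ^ tmix) s s' :=
          Finset.sum_le_sum fun s hs =>
            mul_le_mul_of_nonneg_left (hlow s hs) (hμ0 s)
      _ ≤ (tmix : ℝ) * L := hg tmix
  rw [ge_iff_le, div_div_eq_mul_div, div_le_iff₀ hLpos]
  nlinarith [hcomb, hMpos]
end

section
/- Consider any finite MDP with state space S and action space A (with |A| ≥ 2) in which every stationary policy is unichain. Then the minimal diameter over policies satisfies D* ≥ log_{|A|}(|S|) − 3. -/
open Finset


section AuxMDP

variable {S : Type*} [Fintype S] [DecidableEq S]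

/-- The taboo matrix: `P` with row and column `z` zeroed out. -/
noncomputable def Qm (P : S → S → ℝ) (z : S) : S → S → ℝ :=
  fun s s' => if s = z ∨ s' = z then 0 else P s s'

/-- Survival probabilities: probability of avoiding `z` for `k` steps. -/
noncomputable def gf (P : S → S → ℝ) (z : S) : ℕ → S → ℝ
  | 0 => fun s => if s = z then 0 else 1
  | (k+1) => fun s => ∑ s', Qm P z s s' * gf P z k s'

/-- First-hit probabilities at exact times. -/
noncomputable def wf (P : S → S → ℝ) (z : S) : ℕ → S → ℝ
  | 0 => fun s => if s = z then 0 else P s z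
  | (k+1) => fun s => ∑ s', Qm P z s s' * wf P z k s'

/-- Powers of `P` (shifted by one): `mf P k = P^(k+1)`. -/
noncomputable def mf (P : S → S → ℝ) : ℕ → S → S → ℝ
  | 0 => P
  | (k+1) => fun s z => ∑ s', P s s' * mf P k s' z

variable {P : S → S → ℝ} {z : S}

lemma Qm_nonneg (hP0 : ∀ s s', 0 ≤ P s s') (s s' : S) : 0 ≤ Qm P z s s' := by
  unfold Qm; split
  · exact le_rfl
  · exact hP0 s s'

lemma Qm_le (hP0 : ∀ s s', 0 ≤ P s s') (s s' : S) : Qm P z s s' ≤ P s s' := by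
  unfold Qm; split
  · exact hP0 s s'
  · exact le_rfl

lemma gf_nonneg (hP0 : ∀ s s', 0 ≤ P s s') : ∀ k s, 0 ≤ gf P z k s := by
  intro k
  induction k with
  | zero => intro s; simp only [gf]; split <;> norm_num
  | succ k ih =>
    intro s
    exact Finset.sum_nonneg fun s' _ => mul_nonneg (Qm_nonneg hP0 s s') (ih s')

lemma gf_succ_le (hP0 : ∀ s s', 0 ≤ P s s') (hP1 : ∀ s, ∑ s', P s s' = 1) :
    ∀ k s, gf P z (k+1) s ≤ gf P z k s := by
  intro k
  induction k with
  | zero =>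
    intro s
    by_cases hs : s = z
    · simp only [gf]
      have : ∀ s', Qm P z s s' * (if s' = z then (0:ℝ) else 1) = 0 := by
        intro s'; simp [Qm, hs]
      rw [Finset.sum_congr rfl fun s' _ => this s']
      simp [hs]
    · simp only [gf, if_neg hs]
      calc ∑ s', Qm P z s s' * (if s' = z then (0:ℝ) else 1)
          ≤ ∑ s', P s s' := by
            apply Finset.sum_le_sum
            intro s' _
            by_cases h' : s' = z
            · simp only [h', if_pos, mul_zero]
              exact hP0 _ _
            · simp only [if_neg h', mul_one]
              exact Qm_le hP0 s s'
        _ = 1 := hP1 s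
  | succ k ih =>
    intro s
    simp only [gf]
    apply Finset.sum_le_sum
    intro s' _
    exact mul_le_mul_of_nonneg_left (ih s') (Qm_nonneg hP0 s s')

lemma gf_anti (hP0 : ∀ s s', 0 ≤ P s s') (hP1 : ∀ s, ∑ s', P s s' = 1)
    {j k : ℕ} (hjk : j ≤ k) (s : S) : gf P z k s ≤ gf P z j s := by
  induction k, hjk using Nat.le_induction with
  | base => exact le_rfl
  | succ k hk ih => exact (gf_succ_le hP0 hP1 k s).trans ih

/-- Markov-type bound: partial sums of survival probabilities lower-bound the
expected hitting time. -/
lemma sum_gf_le (hP0 : ∀ s s', 0 ≤ P s s')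
    (h : S → ℝ) (hz : h z = 0) (hnn : ∀ s, 0 ≤ h s)
    (hrec : ∀ s, s ≠ z → h s = 1 + ∑ s', P s s' * h s') :
    ∀ k s, ∑ j ∈ Finset.range k, gf P z j s ≤ h s := by
  intro k
  induction k with
  | zero => intro s; simpa using hnn s
  | succ k ih =>
    intro s
    rw [Finset.sum_range_succ']
    have hswap : ∑ j ∈ Finset.range k, gf P z (j+1) s
        = ∑ s', Qm P z s s' * ∑ j ∈ Finset.range k, gf P z j s' := by
      simp only [gf]
      rw [Finset.sum_comm]
      simp [Finset.mul_sum]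
    rw [hswap]
    by_cases hs : s = z
    · have h1 : ∀ s', Qm P z s s' * (∑ j ∈ Finset.range k, gf P z j s') = 0 := by
        intro s'; simp [Qm, hs]
      rw [Finset.sum_congr rfl fun s' _ => h1 s']
      simp [gf, hs, hz]
    · have hb : ∑ s', Qm P z s s' * ∑ j ∈ Finset.range k, gf P z j s'
          ≤ ∑ s', P s s' * h s' := by
        apply Finset.sum_le_sum
        intro s' _
        by_cases h' : s' = z
        · simp only [Qm, h', or_true, if_pos, zero_mul]
          exact mul_nonneg (hP0 _ _) (hnn _)
        · calc Qm P z s s' * ∑ j ∈ Finset.range k, gf P z j s'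
              ≤ Qm P z s s' * h s' :=
              mul_le_mul_of_nonneg_left (ih s') (Qm_nonneg hP0 s s')
            _ ≤ P s s' * h s' :=
              mul_le_mul_of_nonneg_right (Qm_le hP0 s s') (hnn s')
      simp only [gf, if_neg hs]
      rw [hrec s hs]
      linarith

lemma wf_nonneg (hP0 : ∀ s s', 0 ≤ P s s') : ∀ k s, 0 ≤ wf P z k s := by
  intro k
  induction k with
  | zero => intro s; simp only [wf]; split; exacts [le_rfl, hP0 s z]
  | succ k ih =>
    intro s
    exact Finset.sum_nonneg fun s' _ => mul_nonneg (Qm_nonneg hP0 s s') (ih s')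

lemma wf_eq_sub (hP1 : ∀ s, ∑ s', P s s' = 1) :
    ∀ k s, wf P z k s = gf P z k s - gf P z (k+1) s := by
  intro k
  induction k with
  | zero =>
    intro s
    by_cases hs : s = z
    · subst hs
      simp [wf, gf, Qm]
    · simp only [wf, gf, if_neg hs]
      have h1 : ∀ s', Qm P z s s' * (if s' = z then (0:ℝ) else 1)
          = P s s' - (if s' = z then P s s' else 0) := by
        intro s'
        by_cases h' : s' = z <;> simp [Qm, h', hs]
      rw [Finset.sum_congr rfl fun s' _ => h1 s', Finset.sum_sub_distrib,
        Finset.sum_ite_eq' Finset.univ z (fun s' => P s s'), hP1 s]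
      simp
  | succ k ih =>
    intro s
    have e1 : wf P z (k+1) s = ∑ s', Qm P z s s' * wf P z k s' := rfl
    have e2 : gf P z (k+1) s = ∑ s', Qm P z s s' * gf P z k s' := rfl
    have e3 : gf P z (k+1+1) s = ∑ s', Qm P z s s' * gf P z (k+1) s' := rfl
    rw [e1, e2, e3, ← Finset.sum_sub_distrib]
    exact Finset.sum_congr rfl fun s' _ => by rw [ih s']; ring

lemma mf_nonneg (hP0 : ∀ s s', 0 ≤ P s s') : ∀ k s z', 0 ≤ mf P k s z' := by
  intro k
  induction k with
  | zero => exact hP0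
  | succ k ih =>
    intro s z'
    exact Finset.sum_nonneg fun s' _ => mul_nonneg (hP0 s s') (ih s' z')

lemma mf_rowsum (hP1 : ∀ s, ∑ s', P s s' = 1) : ∀ k s, ∑ z', mf P k s z' = 1 := by
  intro k
  induction k with
  | zero => exact hP1
  | succ k ih =>
    intro s
    simp only [mf]
    rw [Finset.sum_comm]
    calc ∑ s', ∑ z', P s s' * mf P k s' z'
        = ∑ s', P s s' * ∑ z', mf P k s' z' := by simp [Finset.mul_sum]
      _ = ∑ s', P s s' := by simp [fun s' => ih s']
      _ = 1 := hP1 s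

lemma wf_le_mf (hP0 : ∀ s s', 0 ≤ P s s') : ∀ k s, wf P z k s ≤ mf P k s z := by
  intro k
  induction k with
  | zero =>
    intro s
    simp only [wf, mf]
    split
    · exact hP0 s z
    · exact le_rfl
  | succ k ih =>
    intro s
    simp only [wf, mf]
    apply Finset.sum_le_sum
    intro s' _
    calc Qm P z s s' * wf P z k s' ≤ Qm P z s s' * mf P k s' z :=
        mul_le_mul_of_nonneg_left (ih s') (Qm_nonneg hP0 s s')
      _ ≤ P s s' * mf P k s' z :=
        mul_le_mul_of_nonneg_right (Qm_le hP0 s s') (mf_nonneg hP0 k s' z)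

end AuxMDP

/-- The key analytic inequality: `4 logb b x ≤ x + 9` for `b ≥ 2`, `x ≥ 1`. -/
lemma four_logb_le (b x : ℝ) (hb : 2 ≤ b) (hx : 1 ≤ x) :
    4 * Real.logb b x ≤ x + 9 := by
  have hlog2 : (0.6931471803 : ℝ) < Real.log 2 := Real.log_two_gt_d9
  have hlogb : Real.log 2 ≤ Real.log b := Real.log_le_log (by norm_num) hb
  have hlogx : 0 ≤ Real.log x := Real.log_nonneg hx
  have h1 : Real.logb b x ≤ Real.log x / Real.log 2 := by
    unfold Real.logb
    apply div_le_div_of_nonneg_left hlogx (by linarith) hlogb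
  set t := x ^ (4⁻¹ : ℝ) with ht
  have ht1 : 1 ≤ t := Real.one_le_rpow hx (by norm_num)
  have htx : t ^ (4:ℕ) = x := by
    rw [ht, ← Real.rpow_natCast (x ^ (4⁻¹:ℝ)) 4, ← Real.rpow_mul (by linarith)]
    norm_num
  have hlogt : Real.log x = 4 * Real.log t := by
    rw [← htx, Real.log_pow]; push_cast; ring
  have hlt : Real.log t ≤ t - 1 := Real.log_le_sub_one_of_pos (by linarith)
  have key : 16 * (t - 1) ≤ (x + 9) * Real.log 2 := by
    rw [← htx]
    push_cast
    nlinarith [sq_nonneg (t^2 - 3.2178), sq_nonneg (t - 1.7934), sq_nonneg t,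
      sq_nonneg (t - 1), pow_le_pow_left₀ (by norm_num : (0:ℝ) ≤ 1) ht1 4]
  have h2 : Real.log x ≤ 4 * (t - 1) := by rw [hlogt]; linarith
  have h5 : Real.log x / Real.log 2 ≤ (x + 9) / 4 := by
    rw [div_le_div_iff₀ (by linarith) (by norm_num)]
    linarith
  linarith


/-- In any finite MDP with |A| ≥ 2 in which every stationary policy induces an
irreducible chain (so hitting times are finite), the minimal diameter over policies
satisfies D* ≥ log_{|A|}(|S|) − 3.  Equivalently: for every stationary policy π and every
(nonnegative) solution `hit` of the expected-hitting-time recurrence for the induced chain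
T^π, some ordered pair of states has expected hitting time at least log_{|A|}(|S|) − 3. -/
theorem minimal_diameter_log_lower_bound
    {S A : Type*} [Fintype S] [DecidableEq S] [Nonempty S] [Fintype A] [Nonempty A]
    (hA : 2 ≤ Fintype.card A)
    (T : S → A → S → ℝ)
    (hT0 : ∀ s a s', 0 ≤ T s a s') (hT1 : ∀ s a, ∑ s', T s a s' = 1)
    (π : S → A → ℝ)
    (hπ0 : ∀ s a, 0 ≤ π s a) (hπ1 : ∀ s, ∑ a, π s a = 1)
    (hirr : ∀ s s', ∃ n, 0 < ((Matrix.of fun s s' => ∑ a, π s a * T s a s') ^ n) s s')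
    (hit : S → S → ℝ)
    (hit_nonneg : ∀ s₀ s₁, 0 ≤ hit s₀ s₁)
    (hit_self : ∀ s, hit s s = 0)
    (hit_rec : ∀ s₀ s₁, s₀ ≠ s₁ →
      hit s₀ s₁ = 1 + ∑ s', (∑ a, π s₀ a * T s₀ a s') * hit s' s₁) :
    ∃ s₀ s₁ : S, hit s₀ s₁ ≥ Real.logb (Fintype.card A) (Fintype.card S) - 3 := by
  by_contra hcon
  push_neg at hcon
  set L : ℝ := Real.logb (Fintype.card A) (Fintype.card S) - 3 with hL
  -- the induced chain
  set P : S → S → ℝ := fun s s' => ∑ a, π s a * T s a s' with hPdef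
  have hP0 : ∀ s s', 0 ≤ P s s' := fun s s' =>
    Finset.sum_nonneg fun a _ => mul_nonneg (hπ0 s a) (hT0 s a s')
  have hP1 : ∀ s, ∑ s', P s s' = 1 := by
    intro s
    rw [hPdef]
    rw [Finset.sum_comm]
    simp_rw [← Finset.mul_sum, hT1, mul_one]
    exact hπ1 s
  -- basic positivity of L
  obtain ⟨t⟩ := ‹Nonempty S›
  have hL0 : 0 < L := by have := hcon t t; rw [hit_self t] at this; linarith
  -- |S| ≥ 2
  have hcard2 : 2 ≤ Fintype.card S := by
    by_contra hc
    push_neg at hc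
    have h1 : Fintype.card S = 1 := by
      have := Fintype.card_pos (α := S); omega
    rw [hL, h1] at hL0
    simp [Real.logb_one] at hL0
    linarith
  -- L > 1
  have hL1 : 1 < L := by
    obtain ⟨s₀, s₁, hne⟩ := Fintype.exists_pair_of_one_lt_card (by omega : 1 < Fintype.card S)
    have h1 : (1:ℝ) ≤ hit s₀ s₁ := by
      rw [hit_rec s₀ s₁ hne]
      have : 0 ≤ ∑ s', (∑ a, π s₀ a * T s₀ a s') * hit s' s₁ :=
        Finset.sum_nonneg fun s' _ => mul_nonneg (hP0 s₀ s') (hit_nonneg s' s₁)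
      linarith
    exact lt_of_le_of_lt h1 (hcon s₀ s₁)
  -- choose the horizon k
  set k : ℕ := ⌈2 * L⌉₊ with hk
  have hk2L : 2 * L ≤ (k:ℝ) := Nat.le_ceil _
  have hkub : (k:ℝ) < 2 * L + 1 := Nat.ceil_lt_add_one (by linarith)
  have hkpos : (0:ℝ) < (k:ℝ) := by linarith
  -- fix a start state s₀
  set s₀ := t with hs₀
  -- survival probability bound for each target z ≠ s₀
  have hsurv : ∀ z, z ≠ s₀ → gf P z k s₀ < L / k := by
    intro z hz
    have hmk : (k:ℝ) * gf P z k s₀ ≤ hit s₀ z := by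
      have h1 : ∑ j ∈ Finset.range k, gf P z j s₀ ≤ hit s₀ z := by
        apply sum_gf_le hP0 (fun s => hit s z) (hit_self z) (fun s => hit_nonneg s z)
        intro s hs
        exact hit_rec s z hs
      have h2 : (k:ℝ) * gf P z k s₀ ≤ ∑ j ∈ Finset.range k, gf P z j s₀ := by
        calc (k:ℝ) * gf P z k s₀ = ∑ _j ∈ Finset.range k, gf P z k s₀ := by
              rw [Finset.sum_const, Finset.card_range, nsmul_eq_mul]
          _ ≤ ∑ j ∈ Finset.range k, gf P z j s₀ :=
              Finset.sum_le_sum fun j hj =>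
                gf_anti hP0 hP1 (le_of_lt (Finset.mem_range.mp hj)) s₀
      linarith
    rw [lt_div_iff₀ hkpos]
    calc gf P z k s₀ * k = (k:ℝ) * gf P z k s₀ := by ring
      _ ≤ hit s₀ z := hmk
      _ < L := hcon s₀ z
  -- counting: total first-hit probability mass is at most k
  have hcount : ∑ z ∈ Finset.univ.erase s₀, (1 - gf P z k s₀) ≤ (k:ℝ) := by
    have h1 : ∀ z ∈ Finset.univ.erase s₀,
        1 - gf P z k s₀ = ∑ j ∈ Finset.range k, wf P z j s₀ := by
      intro z hz
      have hne : s₀ ≠ z := fun h => (Finset.mem_erase.mp hz).1 h.symm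
      have h0 : gf P z 0 s₀ = 1 := by simp [gf, hne]
      calc 1 - gf P z k s₀ = gf P z 0 s₀ - gf P z k s₀ := by rw [h0]
        _ = ∑ j ∈ Finset.range k, (gf P z j s₀ - gf P z (j+1) s₀) :=
            (Finset.sum_range_sub' (fun j => gf P z j s₀) k).symm
        _ = ∑ j ∈ Finset.range k, wf P z j s₀ :=
            Finset.sum_congr rfl fun j _ => (wf_eq_sub hP1 j s₀).symm
    rw [Finset.sum_congr rfl h1, Finset.sum_comm]
    calc ∑ j ∈ Finset.range k, ∑ z ∈ Finset.univ.erase s₀, wf P z j s₀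
        ≤ ∑ j ∈ Finset.range k, (1:ℝ) := by
          apply Finset.sum_le_sum
          intro j _
          calc ∑ z ∈ Finset.univ.erase s₀, wf P z j s₀
              ≤ ∑ z ∈ Finset.univ.erase s₀, mf P j s₀ z :=
                Finset.sum_le_sum fun z _ => wf_le_mf hP0 j s₀
            _ ≤ ∑ z, mf P j s₀ z :=
                Finset.sum_le_sum_of_subset_of_nonneg (Finset.subset_univ _)
                  (fun z _ _ => mf_nonneg hP0 j s₀ z)
            _ = 1 := mf_rowsum hP1 j s₀
      _ = (k:ℝ) := by rw [Finset.sum_const, Finset.card_range, nsmul_eq_mul, mul_one]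
  -- lower bound the same sum
  have hcarde : ((Finset.univ.erase s₀).card : ℝ) = (Fintype.card S : ℝ) - 1 := by
    rw [Finset.card_erase_of_mem (Finset.mem_univ s₀), Finset.card_univ]
    have : 1 ≤ Fintype.card S := Fintype.card_pos
    push_cast [Nat.cast_sub this]
    ring
  have hne' : (Finset.univ.erase s₀).Nonempty := by
    rw [← Finset.card_pos]
    have : 1 ≤ Fintype.card S - 1 := by omega
    rw [Finset.card_erase_of_mem (Finset.mem_univ s₀), Finset.card_univ]
    omega
  have hlower : ((Fintype.card S : ℝ) - 1) * (1 - L / k)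
      < ∑ z ∈ Finset.univ.erase s₀, (1 - gf P z k s₀) := by
    calc ((Fintype.card S : ℝ) - 1) * (1 - L / k)
        = ∑ _z ∈ Finset.univ.erase s₀, (1 - L / k) := by
          rw [Finset.sum_const, nsmul_eq_mul, hcarde]
      _ < ∑ z ∈ Finset.univ.erase s₀, (1 - gf P z k s₀) := by
          apply Finset.sum_lt_sum_of_nonempty hne'
          intro z hz
          have := hsurv z (Finset.mem_erase.mp hz).1
          linarith
  -- combine
  have hhalf : (1:ℝ)/2 ≤ 1 - L / k := by
    have : L / k ≤ 1/2 := by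
      rw [div_le_iff₀ hkpos]
      linarith
    linarith
  have hfinal : ((Fintype.card S : ℝ) - 1) * (1/2) < (k:ℝ) := by
    have hm : (0:ℝ) ≤ (Fintype.card S : ℝ) - 1 := by
      have : (2:ℝ) ≤ (Fintype.card S : ℝ) := by exact_mod_cast hcard2
      linarith
    calc ((Fintype.card S : ℝ) - 1) * (1/2)
        ≤ ((Fintype.card S : ℝ) - 1) * (1 - L / k) :=
          mul_le_mul_of_nonneg_left hhalf hm
      _ < ∑ z ∈ Finset.univ.erase s₀, (1 - gf P z k s₀) := hlower
      _ ≤ (k:ℝ) := hcount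
  -- so card S < 4L + 3 = 4 logb |A| |S| - 9 ≤ 4 logb 2 |S| - 9 ≤ |S|: contradiction
  have hn : (Fintype.card S : ℝ) < 4 * L + 3 := by linarith
  have hbase : Real.logb (Fintype.card A) (Fintype.card S)
      ≤ Real.logb 2 (Fintype.card S) := by
    unfold Real.logb
    have hlogx : 0 ≤ Real.log (Fintype.card S) := by
      apply Real.log_nonneg
      exact_mod_cast Nat.one_le_iff_ne_zero.mpr Fintype.card_ne_zero
    have hA2 : (2:ℝ) ≤ (Fintype.card A : ℝ) := by exact_mod_cast hA
    have hlog2 : (0:ℝ) < Real.log 2 := Real.log_pos (by norm_num)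
    exact div_le_div_of_nonneg_left hlogx hlog2 (Real.log_le_log (by norm_num) hA2)
  have hineq : 4 * Real.logb 2 (Fintype.card S) ≤ (Fintype.card S : ℝ) + 9 := by
    apply four_logb_le _ _ (by norm_num)
    exact_mod_cast Fintype.card_pos (α := S)
  rw [hL] at hn
  linarith
end
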